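/- Let (S^{*,*}, s, d_H) be a bicomplex as above with top horizontal degree n, and let φ_n ∈ S^{k,n} be an iterated cocycle, i.e. sφ_n + d_H φ_{n−1} = 0 for some φ_{n−1}. Then there exist elements φ_{n−2}, …, φ_0 and elements ϕ_{n−1}, …, ϕ_0 of the subcomplex W (closed forms) such that s φ_{n−j} + d_H φ_{n−j−1} = ϕ_{n−j} for 1 ≤ j < n and s φ_0 = ϕ_0, equivalently the descent equation s̃ φ̃ = ϕ̃ holds with φ̃ = φ_n + ⋯ + φ_0 and ϕ̃ = ϕ_{n−1} + ⋯ + ϕ_0. -/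
import Mathlib

theorem descent_key (N : ℕ) (S : ℕ → ℕ → Type*) [∀ j m, AddCommGroup (S j m)]
    (s : ∀ j m, S j m →+ S (j + 1) m) (dH : ∀ j m, S j m →+ S j (m + 1))
    (hs : ∀ j m (a : S j m), s (j + 1) m (s j m a) = 0)
    (hanti : ∀ j m (a : S j m), s j (m + 1) (dH j m a) + dH (j + 1) m (s j m a) = 0)
    (W : ∀ j m, AddSubgroup (S j m))
    (hWs : ∀ j m, ∀ ω ∈ W j m, s j m ω = 0)
    (hdec : ∀ (j m : ℕ), m + 1 ≤ N → ∀ φ : S j (m + 1), dH j (m + 1) φ = 0 →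
      ∃ ω ∈ W j (m + 1), ∃ ξ : S j m, φ = ω + dH j m ξ)
    (hdec0 : ∀ j (φ : S j 0), dH j 0 φ = 0 → φ ∈ W j 0) :
    ∀ m j (hj : (j + 1) + m = N + 1) (a : S (j + 1) m),
      dH (j + 2) m (s (j + 1) m a) = 0 →
      ∃ (ψ : ∀ j' m', j' + m' = N + 1 → S j' m')
        (w : ∀ j' m', j' + m' = N + 2 → S j' m'),
        ψ (j + 1) m hj = a ∧
        (∀ j' m' (h : j' + m' = N), j + 1 ≤ j' →
          s j' (m' + 1) (ψ j' (m' + 1) (by omega)) + dH (j' + 1) m' (ψ (j' + 1) m' (by omega))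
            = w (j' + 1) (m' + 1) (by omega)) ∧
        s (N + 1) 0 (ψ (N + 1) 0 (by omega)) = w (N + 2) 0 (by omega) ∧
        (∀ j' m' (h : j' + m' = N + 2), w j' m' h ∈ W j' m') := by
  intro m
  induction m with
  | zero =>
    intro j hj a ha
    refine ⟨fun j' m' h => if h' : j' = j + 1 then
        cast (by subst h'; rw [show m' = 0 by omega]) a else 0,
      fun j' m' h => if h' : j' = j + 2 then
        cast (by subst h'; rw [show m' = 0 by omega]) (s (j + 1) 0 a) else 0,
      ?_, ?_, ?_, ?_⟩
    · beta_reduce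
      rw [dif_pos rfl]
      exact cast_eq _ a
    · intro j' m' h hge; omega
    · beta_reduce
      obtain rfl : j = N := by omega
      rw [dif_pos rfl, cast_eq, dif_pos rfl, cast_eq]
    · intro j' m' h
      beta_reduce
      split
      · rename_i h'
        subst h'
        obtain rfl : m' = 0 := by omega
        rw [cast_eq]
        exact hdec0 _ _ ha
      · exact zero_mem _
  | succ m' IH =>
    intro j hj a ha
    obtain ⟨ω, hω, ξ, hξ⟩ := hdec (j + 2) m' (by omega) (s (j + 1) (m' + 1) a) ha
    have hb : dH (j + 3) m' (s (j + 2) m' (-ξ)) = 0 := by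
      have h1 : s (j + 2) (m' + 1) (dH (j + 2) m' ξ) = 0 := by
        have h4 : dH (j + 2) m' ξ = s (j + 1) (m' + 1) a - ω := by rw [hξ]; abel
        rw [h4, map_sub, hs, hWs _ _ ω hω, sub_zero]
      have h2 := hanti (j + 2) m' ξ
      rw [h1, zero_add] at h2
      rw [map_neg, map_neg, h2, neg_zero]
    obtain ⟨ψr, wr, hψr, heqr, hfinr, hmemr⟩ := IH (j + 1) (by omega) (-ξ) hb
    refine ⟨fun j' m'' h => if h' : j' = j + 1 then
        cast (by subst h'; rw [show m'' = m' + 1 by omega]) a else ψr j' m'' h,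
      fun j' m'' h => if h' : j' = j + 2 then
        cast (by subst h'; rw [show m'' = m' + 1 by omega]) ω else wr j' m'' h,
      ?_, ?_, ?_, ?_⟩
    · beta_reduce
      rw [dif_pos rfl]
      exact cast_eq _ a
    · intro j' m'' h hge
      beta_reduce
      by_cases h' : j' = j + 1
      · subst h'
        obtain rfl : m'' = m' := by omega
        rw [dif_pos rfl, cast_eq, dif_neg (by omega : ¬ j + 1 + 1 = j + 1),
          dif_pos (by omega : j + 1 + 1 = j + 2)]
        rw [cast_eq, hψr, hξ, map_neg]
        abel
      · rw [dif_neg h', dif_neg (by omega : ¬ j' + 1 = j + 1),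
          dif_neg (by omega : ¬ j' + 1 = j + 2)]
        exact heqr j' m'' h (by omega)
    · beta_reduce
      rw [dif_neg (by omega : ¬ N + 1 = j + 1), dif_neg (by omega : ¬ N + 2 = j + 2)]
      exact hfinr
    · intro j' m'' h
      beta_reduce
      by_cases h' : j' = j + 2
      · subst h'
        obtain rfl : m'' = m' + 1 := by omega
        rw [dif_pos rfl, cast_eq]
        exact hω
      · rw [dif_neg h']
        exact hmemr _ _ _


/-- The descent equations `s̃ ψ̃ = w̃` for a bicomplex `(S, s, d_H)` with top horizontal
degree `N + 1`.  Charges are re-indexed to start at `0`, so that `ψ j m` (with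
`j + m = N + 1`) is the component of charge offset `j` and horizontal degree `m`, and
`w j m` (with `j + m = N + 2`) are the right-hand sides. -/
def DescentEqs (N : ℕ) (S : ℕ → ℕ → Type*) [∀ j m, AddCommGroup (S j m)]
    (s : ∀ j m, S j m →+ S (j + 1) m) (dH : ∀ j m, S j m →+ S j (m + 1))
    (ψ : ∀ j m, j + m = N + 1 → S j m)
    (w : ∀ j m, j + m = N + 2 → S j m) : Prop :=
  (∀ j m (h : j + m = N),
      s j (m + 1) (ψ j (m + 1) (by omega)) + dH (j + 1) m (ψ (j + 1) m (by omega))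
        = w (j + 1) (m + 1) (by omega)) ∧
  s (N + 1) 0 (ψ (N + 1) 0 (by omega)) = w (N + 2) 0 (by omega)

/-- Let `(S^{*,*}, s, d_H)` be a bicomplex with top horizontal degree
`n = N + 1`, `s² = d_H² = 0`, `s d_H + d_H s = 0`, with the structural decomposition
property with respect to a subcomplex `W ⊆ ker s ∩ ker d_H` of closed forms.  If
`φtop ∈ S^{0,n}` is an iterated cocycle, i.e. `s φtop + d_H φpre = 0` for some `φpre`,
then there are elements `ψ j m` (descending in horizontal degree) with
`ψ 0 n = φtop`, `ψ 1 (n-1) = φpre`, and right-hand sides `w` lying in `W`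
(with vanishing top component), solving the descent equations `s̃ ψ̃ = w̃`. -/
theorem stmt_8 (N : ℕ) (S : ℕ → ℕ → Type*) [∀ j m, AddCommGroup (S j m)]
    (s : ∀ j m, S j m →+ S (j + 1) m) (dH : ∀ j m, S j m →+ S j (m + 1))
    (hs : ∀ j m (a : S j m), s (j + 1) m (s j m a) = 0)
    (hd : ∀ j m (a : S j m), dH j (m + 1) (dH j m a) = 0)
    (hanti : ∀ j m (a : S j m), s j (m + 1) (dH j m a) + dH (j + 1) m (s j m a) = 0)
    (W : ∀ j m, AddSubgroup (S j m))
    (hWs : ∀ j m, ∀ ω ∈ W j m, s j m ω = 0)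
    (hWd : ∀ j m, ∀ ω ∈ W j m, dH j m ω = 0)
    (hdec : ∀ (j m : ℕ), m + 1 ≤ N → ∀ φ : S j (m + 1), dH j (m + 1) φ = 0 →
      ∃ ω ∈ W j (m + 1), ∃ ξ : S j m, φ = ω + dH j m ξ)
    (hdec0 : ∀ j (φ : S j 0), dH j 0 φ = 0 → φ ∈ W j 0)
    (φtop : S 0 (N + 1)) (φpre : S 1 N)
    (hstart : s 0 (N + 1) φtop + dH 1 N φpre = 0) :
    ∃ (ψ : ∀ j m, j + m = N + 1 → S j m) (w : ∀ j m, j + m = N + 2 → S j m),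
      DescentEqs N S s dH ψ w ∧
      (∀ j m (h : j + m = N + 2), w j m h ∈ W j m) ∧
      w 1 (N + 1) (by omega) = 0 ∧
      ψ 0 (N + 1) (by omega) = φtop ∧
      ψ 1 N (by omega) = φpre := by
  have ha : dH 2 N (s 1 N φpre) = 0 := by
    have h3 : s 1 (N + 1) (dH 1 N φpre) = 0 := by
      have h4 : dH 1 N φpre = -(s 0 (N + 1) φtop) :=
        eq_neg_of_add_eq_zero_right hstart
      rw [h4, map_neg, hs, neg_zero]
    have h2 := hanti 1 N φpre
    rwa [h3, zero_add] at h2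
  obtain ⟨ψ0, w0, hψ0, heq0, hfin0, hmem0⟩ :=
    descent_key N S s dH hs hanti W hWs hdec hdec0 N 0 (by omega) φpre ha
  refine ⟨fun j m h => if h' : j = 0 then
      cast (by subst h'; rw [show m = N + 1 by omega]) φtop else ψ0 j m h,
    fun j m h => if h' : j = 1 then 0 else w0 j m h,
    ⟨?_, ?_⟩, ?_, ?_, ?_, ?_⟩
  · intro j m h
    beta_reduce
    by_cases h' : j = 0
    · subst h'
      obtain rfl : N = m := by omega
      rw [dif_pos rfl, cast_eq, dif_neg (by omega : ¬ (0:ℕ) + 1 = 0),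
        dif_pos (by omega : (0:ℕ) + 1 = 1)]
      rw [show ψ0 (0 + 1) N (by omega) = φpre from hψ0]
      exact hstart
    · rw [dif_neg h', dif_neg (by omega : ¬ j + 1 = 0), dif_neg (by omega : ¬ j + 1 = 1)]
      exact heq0 j m h (by omega)
  · beta_reduce
    rw [dif_neg (by omega : ¬ N + 1 = 0), dif_neg (by omega : ¬ N + 2 = 1)]
    exact hfin0
  · intro j m h
    beta_reduce
    by_cases h' : j = 1
    · rw [dif_pos h']; exact zero_mem _
    · rw [dif_neg h']; exact hmem0 _ _ _
  · beta_reduce; rw [dif_pos rfl]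
  · beta_reduce
    rw [dif_pos rfl]
    exact cast_eq _ φtop
  · beta_reduce
    rw [dif_neg (by omega : ¬ (1:ℕ) = 0)]
    exact hψ0
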